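/- arXiv:1507.06329 — 3 statements merged into one kernel-verified Lean document; each statement's English description precedes it below -/
import Mathlib

section
/- Let G be a finite abelian group and let D ⊆ G with |D| = |G| - c ≥ c. Let b ∈ G and 0 ≤ k ≤ |D|. Then |N(D,k,b) - (1/|G|)·C(|G|-c, k)| ≤ C(c + (|G|-2c)·δ(e(G)) + k - 1, k), where e(G) is the exponent of G. -/
/-!
Expanding the condition `∑ S = b` in additive characters gives
`|G| · N(D,k,b) = ∑_ψ ψ(-b) e_k(ψ(D))`, with `e_k` the `k`-th elementary symmetric function; the
trivial character contributes `C(|D|, k)`. If `ψ` has order `d`, the power sums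
`p_j = ∑_{x ∈ D} ψ(x)^j` equal `|D|` when `d ∣ j` and otherwise equal `-∑_{x ∉ D} ψ(x)^j` by
orthogonality, so have norm at most `c`. Newton's identities `k e_k = ∑_j ± p_j e_{k-j}` then give
`|e_k| ≤ C(X + k - 1, k)` by induction on `k` whenever `1 ≤ X` and `c + (|D| - c)/d ≤ X`: against
the decreasing weights `C(X + k - j - 1, k - j)` only every `d`-th `|p_j|` is large, so the `|p_j|`
average to at most `X`, and `C(X + k - 1, k)` solves the recursion with every `|p_j|` replaced by
`X`. For `ψ ≠ 0`, `1/d ≤ δ(d) ≤ δ(e(G))` because `1 < d ∣ e(G)`.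
-/

open Finset

/-- `N(D, k, b)`: the number of `k`-element subsets `S ⊆ D` with `∑_{x ∈ S} x = b`. -/
def subsetSumCount {G : Type*} [AddCommGroup G] [DecidableEq G]
    (D : Finset G) (k : ℕ) (b : G) : ℕ :=
  ((D.powersetCard k).filter (fun S => ∑ x ∈ S, x = b)).card

/-- The real "binomial coefficient" `C(x, k) = x(x-1)⋯(x-k+1)/k!`. -/
noncomputable def realChoose (x : ℝ) (k : ℕ) : ℝ :=
  (∏ j ∈ Finset.range k, (x - j)) / (Nat.factorial k)

/-- `δ(n) = ∑_{i ∣ n, μ(i) = -1} 1/i`. -/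
noncomputable def deltaMoebius (n : ℕ) : ℝ :=
  ∑ i ∈ n.divisors.filter (fun i => ArithmeticFunction.moebius i = -1), (1 : ℝ) / i

open Polynomial

namespace Ring

section Field

variable {R : Type*} [Field R] [CharZero R]

theorem succ_mul_multichoose_succ (x : R) (k : ℕ) :
    (k + 1) * multichoose x (k + 1) = (x + k) * multichoose x k := by
  have h := factorial_nsmul_multichoose_eq_ascPochhammer x (k + 1)
  rw [ascPochhammer_smeval_eq_eval, ascPochhammer_succ_eval, ← ascPochhammer_smeval_eq_eval,
    ← factorial_nsmul_multichoose_eq_ascPochhammer, Nat.factorial_succ, mul_nsmul] at h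
  simp only [nsmul_eq_mul, Nat.cast_add, Nat.cast_one] at h
  apply mul_left_cancel₀ (Nat.cast_ne_zero.2 (Nat.factorial_ne_zero k) : (k.factorial : R) ≠ 0)
  linear_combination h

theorem mul_sum_range_multichoose (x : R) (k : ℕ) :
    x * ∑ j ∈ range k, multichoose x j = k * multichoose x k := by
  induction k with
  | zero => simp
  | succ k ih =>
    rw [sum_range_succ, mul_add, ih, Nat.cast_succ, succ_mul_multichoose_succ]
    ring

end Field

theorem multichoose_nonneg {x : ℝ} (hx : 0 ≤ x) (k : ℕ) : 0 ≤ multichoose x k := by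
  induction k with
  | zero => simp
  | succ k ih =>
    have h := succ_mul_multichoose_succ x k
    have : 0 ≤ (x + k) * multichoose x k := mul_nonneg (by positivity) ih
    nlinarith

theorem monotone_multichoose {x : ℝ} (hx : 1 ≤ x) : Monotone (multichoose x) := by
  refine monotone_nat_of_le_succ fun k => ?_
  have h := succ_mul_multichoose_succ x k
  have := multichoose_nonneg (by linarith) k (x := x)
  nlinarith

end Ring

theorem realChoose_eq_choose (x : ℝ) (k : ℕ) : realChoose x k = Ring.choose x k := by
  rw [Ring.choose_eq_smul, ← aeval_eq_smeval, aeval_def, eval₂_eq_eval_map, descPochhammer_map,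
    descPochhammer_eval_eq_prod_range, smul_eq_mul, realChoose, div_eq_inv_mul]

theorem realChoose_natCast (n k : ℕ) : realChoose n k = n.choose k := by
  rw [realChoose_eq_choose, Ring.choose_natCast]

theorem realChoose_add_sub_one (x : ℝ) (k : ℕ) :
    realChoose (x + k - 1) k = Ring.multichoose x k := by
  rw [realChoose_eq_choose, Ring.multichoose_eq]

section Antitone

variable {M : Type*} [AddCommMonoid M] [PartialOrder M] [IsOrderedAddMonoid M]
  {g : ℕ → M}

theorem Antitone.nsmul_sum_Ioc_mul_le (hg : Antitone g) (d m : ℕ) :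
    d • ∑ i ∈ Ioc 0 m, g (d * i) ≤ ∑ j ∈ Ioc 0 (d * m), g j := by
  induction m with
  | zero => simp
  | succ m ih =>
    rw [sum_Ioc_succ_top (Nat.zero_le m), nsmul_add,
      ← sum_Ioc_consecutive g (Nat.zero_le (d * m)) (Nat.mul_le_mul_left d m.le_succ)]
    have hcard : #(Ioc (d * m) (d * (m + 1))) = d := by
      rw [Nat.card_Ioc, Nat.mul_succ, Nat.add_sub_cancel_left]
    have hblock := card_nsmul_le_sum (Ioc (d * m) (d * (m + 1))) g (g (d * (m + 1)))
      fun j hj => hg (mem_Ioc.1 hj).2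
    rw [hcard] at hblock
    exact add_le_add ih hblock

theorem Antitone.nsmul_sum_filter_dvd_le_sum (hg : Antitone g) (hg0 : 0 ≤ g) {d : ℕ}
    (hd : 0 < d) (k : ℕ) :
    d • ∑ j ∈ Ioc 0 k with d ∣ j, g j ≤ ∑ j ∈ Ioc 0 k, g j := by
  have hmultiples : {j ∈ Ioc 0 k | d ∣ j} = (Ioc 0 (k / d)).image (d * ·) := by
    ext j
    simp only [mem_filter, mem_Ioc, mem_image]
    constructor
    · rintro ⟨⟨hj0, hjk⟩, i, rfl⟩
      exact ⟨i, ⟨Nat.pos_of_mul_pos_left hj0, (Nat.le_div_iff_mul_le hd).2 (by linarith)⟩, rfl⟩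
    · rintro ⟨i, ⟨hi0, hik⟩, rfl⟩
      exact ⟨⟨Nat.mul_pos hd hi0, (Nat.mul_le_mul_left d hik).trans (Nat.mul_div_le k d)⟩, i, rfl⟩
  rw [hmultiples, sum_image fun a _ b _ h => Nat.eq_of_mul_eq_mul_left hd h]
  calc d • ∑ i ∈ Ioc 0 (k / d), g (d * i) ≤ ∑ j ∈ Ioc 0 (d * (k / d)), g j :=
        hg.nsmul_sum_Ioc_mul_le d _
    _ ≤ ∑ j ∈ Ioc 0 k, g j :=
        sum_le_sum_of_subset_of_nonneg (Ioc_subset_Ioc le_rfl (Nat.mul_div_le k d))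
          fun j _ _ => hg0 j

end Antitone

theorem sum_ite_dvd_mul_le_of_antitone {g : ℕ → ℝ} (hg : Antitone g) (hg0 : 0 ≤ g) {d : ℕ}
    (hd : 0 < d) {c n : ℝ} (hcn : c ≤ n) (k : ℕ) :
    ∑ j ∈ Ioc 0 k, (if d ∣ j then n else c) * g j ≤ (c + (n - c) / d) * ∑ j ∈ Ioc 0 k, g j := by
  have hsplit : ∑ j ∈ Ioc 0 k, (if d ∣ j then n else c) * g j
      = c * ∑ j ∈ Ioc 0 k, g j + (n - c) * ∑ j ∈ Ioc 0 k with d ∣ j, g j := by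
    rw [mul_sum, mul_sum, sum_filter, ← sum_add_distrib]
    exact sum_congr rfl fun j _ => by split_ifs <;> ring
  have hmultiples := hg.nsmul_sum_filter_dvd_le_sum hg0 hd k
  rw [nsmul_eq_mul] at hmultiples
  have hd' : (0 : ℝ) < d := Nat.cast_pos.2 hd
  rw [hsplit, add_mul, div_mul_eq_mul_div, mul_div_assoc]
  gcongr
  rwa [le_div_iff₀ hd', mul_comm]

theorem le_multichoose_of_mul_le_sum {e p : ℕ → ℝ} {c n x : ℝ} {d : ℕ} (hd : 0 < d)
    (hc : 0 ≤ c) (hcn : c ≤ n) (hx : c + (n - c) / d ≤ x) (hx1 : 1 ≤ x)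
    (he : 0 ≤ e) (he0 : e 0 ≤ 1) (hp : ∀ j, p j ≤ if d ∣ j then n else c)
    (hrec : ∀ k, k * e k ≤ ∑ j ∈ Ioc 0 k, p j * e (k - j)) (k : ℕ) :
    e k ≤ Ring.multichoose x k := by
  induction k using Nat.strong_induction_on with
  | _ k ih =>
  rcases Nat.eq_zero_or_pos k with rfl | hk
  · simpa using he0
  have hreflect : ∑ j ∈ Ioc 0 k, Ring.multichoose x (k - j) = ∑ i ∈ range k, Ring.multichoose x i :=
    sum_nbij' (k - ·) (k - ·) (fun j hj => by simp only [mem_Ioc, mem_range] at hj ⊢; omega)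
      (fun i hi => by simp only [mem_Ioc, mem_range] at hi ⊢; omega)
      (fun j hj => by simp only [mem_Ioc] at hj; omega)
      (fun i hi => by simp only [mem_range] at hi; omega) (fun j _ => rfl)
  have hweights : Antitone fun j => Ring.multichoose x (k - j) :=
    fun i j hij => Ring.monotone_multichoose hx1 (Nat.sub_le_sub_left hij k)
  have hk' : (0 : ℝ) < k := Nat.cast_pos.2 hk
  refine le_of_mul_le_mul_left ?_ hk'
  calc (k : ℝ) * e k ≤ ∑ j ∈ Ioc 0 k, p j * e (k - j) := hrec k
    _ ≤ ∑ j ∈ Ioc 0 k, (if d ∣ j then n else c) * Ring.multichoose x (k - j) := by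
        refine sum_le_sum fun j hj => ?_
        have hj := mem_Ioc.1 hj
        exact mul_le_mul (hp j) (ih _ (by omega)) (he _) (by split_ifs <;> linarith)
    _ ≤ (c + (n - c) / d) * ∑ j ∈ Ioc 0 k, Ring.multichoose x (k - j) :=
        sum_ite_dvd_mul_le_of_antitone hweights
          (fun j => Ring.multichoose_nonneg (by linarith) _) hd hcn k
    _ ≤ x * ∑ i ∈ range k, Ring.multichoose x i := by
        rw [hreflect]
        exact mul_le_mul_of_nonneg_right hx
          (sum_nonneg fun i _ => Ring.multichoose_nonneg (by linarith) i)
    _ = k * Ring.multichoose x k := Ring.mul_sum_range_multichoose x k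

theorem Multiset.mul_esymm_eq_sum {R : Type*} [CommRing R] (s : Multiset R) (k : ℕ) :
    k * s.esymm k = (-1) ^ (k + 1) * ∑ a ∈ HasAntidiagonal.antidiagonal k with a.1 < k,
      (-1) ^ a.1 * s.esymm a.1 * (s.map (· ^ a.2)).sum := by
  obtain ⟨l, rfl⟩ : ∃ l : List R, (l : Multiset R) = s := Quotient.exists_rep s
  have h := congrArg (MvPolynomial.aeval l.get) (MvPolynomial.mul_esymm_eq_sum (Fin l.length) R k)
  simp only [map_mul, map_natCast, map_pow, map_neg, map_one, map_sum, MvPolynomial.psum,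
    MvPolynomial.aeval_esymm_eq_multiset_esymm, MvPolynomial.aeval_X, Fin.univ_val_map,
    List.ofFn_get] at h
  simpa only [Multiset.map_coe, Multiset.sum_coe, ← Fin.sum_univ_fun_getElem,
    List.get_eq_getElem] using h

theorem Multiset.natCast_mul_norm_esymm_le {𝕜 : Type*} [RCLike 𝕜] (s : Multiset 𝕜) (k : ℕ) :
    k * ‖s.esymm k‖ ≤ ∑ j ∈ Finset.Ioc 0 k, ‖(s.map (· ^ j)).sum‖ * ‖s.esymm (k - j)‖ := by
  calc (k : ℝ) * ‖s.esymm k‖ = ‖(k : 𝕜) * s.esymm k‖ := by rw [norm_mul, RCLike.norm_natCast]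
    _ ≤ ∑ a ∈ HasAntidiagonal.antidiagonal k with a.1 < k,
          ‖s.esymm a.1‖ * ‖(s.map (· ^ a.2)).sum‖ := by
        rw [mul_esymm_eq_sum, norm_mul, norm_pow, norm_neg, norm_one, one_pow, one_mul]
        refine (norm_sum_le _ _).trans_eq (Finset.sum_congr rfl fun a _ => ?_)
        rw [norm_mul, norm_mul, norm_pow, norm_neg, norm_one, one_pow, one_mul]
    _ = ∑ j ∈ Finset.Ioc 0 k, ‖(s.map (· ^ j)).sum‖ * ‖s.esymm (k - j)‖ := by
        refine Finset.sum_nbij' Prod.snd (fun j => (k - j, j)) ?_ ?_ ?_ (by simp) ?_ <;>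
          simp only [Finset.mem_filter, HasAntidiagonal.mem_antidiagonal, Finset.mem_Ioc, and_imp,
            Prod.forall, Prod.mk.injEq, and_true]
        · omega
        · omega
        · omega
        · intro a b hab _
          rw [mul_comm, show k - b = a by omega]

theorem AddChar.map_sum_eq_prod {ι A M : Type*} [AddCommMonoid A] [CommMonoid M]
    (ψ : AddChar A M) (s : Finset ι) (f : ι → A) : ψ (∑ i ∈ s, f i) = ∏ i ∈ s, ψ (f i) := by
  classical
  induction s using Finset.induction_on with
  | empty => simp
  | insert a s ha ih => rw [sum_insert ha, prod_insert ha, map_add_eq_mul, ih]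

theorem deltaMoebius_mono {d e : ℕ} (h : d ∣ e) (he : e ≠ 0) :
    deltaMoebius d ≤ deltaMoebius e :=
  sum_le_sum_of_subset_of_nonneg (filter_subset_filter _ (Nat.divisors_subset_of_dvd he h))
    fun _ _ _ => by positivity

theorem one_div_le_deltaMoebius {d : ℕ} (hd : 1 < d) : 1 / (d : ℝ) ≤ deltaMoebius d := by
  have hp : d.minFac.Prime := Nat.minFac_prime hd.ne'
  have hmem : d.minFac ∈ d.divisors.filter (fun i => ArithmeticFunction.moebius i = -1) := by
    rw [mem_filter, Nat.mem_divisors, ArithmeticFunction.moebius_apply_prime hp]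
    exact ⟨⟨Nat.minFac_dvd d, by omega⟩, rfl⟩
  calc 1 / (d : ℝ) ≤ 1 / (d.minFac : ℝ) :=
        one_div_le_one_div_of_le (Nat.cast_pos.2 hp.pos) (Nat.cast_le.2 (Nat.minFac_le (by omega)))
    _ ≤ deltaMoebius d :=
        single_le_sum (f := fun i : ℕ => 1 / (i : ℝ)) (fun _ _ => by positivity) hmem

theorem AddChar.exponent_nsmul_eq_zero {G M : Type*} [AddCommGroup G] [CommMonoid M]
    (ψ : AddChar G M) : AddMonoid.exponent G • ψ = 0 := by
  ext a
  rw [nsmul_apply, zero_apply, ← map_nsmul_eq_pow, AddMonoid.exponent_nsmul_eq_zero,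
    map_zero_eq_one]

section Characters

variable {G : Type*} [AddCommGroup G]

theorem AddChar.one_div_addOrderOf_le_deltaMoebius_exponent [Finite G] {ψ : AddChar G ℂ}
    (hψ : ψ ≠ 0) : 1 / (addOrderOf ψ : ℝ) ≤ deltaMoebius (AddMonoid.exponent G) := by
  have hexp : AddMonoid.exponent G ≠ 0 := AddMonoid.exponent_ne_zero_of_finite
  have hdvd : addOrderOf ψ ∣ AddMonoid.exponent G :=
    addOrderOf_dvd_of_nsmul_eq_zero ψ.exponent_nsmul_eq_zero
  have hne1 : addOrderOf ψ ≠ 1 := fun h => hψ (AddMonoid.addOrderOf_eq_one_iff.1 h)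
  have hne0 : addOrderOf ψ ≠ 0 := ne_zero_of_dvd_ne_zero hexp hdvd
  exact (one_div_le_deltaMoebius (by omega)).trans (deltaMoebius_mono hdvd hexp)

variable [Fintype G] [DecidableEq G]

theorem AddChar.norm_sum_map_pow_le (ψ : AddChar G ℂ) (D : Finset G) (j : ℕ) :
    ‖((D.val.map ψ).map (· ^ j)).sum‖ ≤ if addOrderOf ψ ∣ j then (#D : ℝ) else #Dᶜ := by
  rw [Multiset.map_map]
  change ‖∑ x ∈ D, (j • ψ) x‖ ≤ _
  split_ifs with h
  · simp [addOrderOf_dvd_iff_nsmul_eq_zero.1 h]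
  · have hsum : ∑ x, (j • ψ) x = 0 :=
      sum_eq_zero_iff_ne_zero.2 (mt addOrderOf_dvd_iff_nsmul_eq_zero.2 h)
    rw [← sum_add_sum_compl D, add_eq_zero_iff_eq_neg] at hsum
    rw [hsum, norm_neg]
    exact (norm_sum_le _ _).trans (by simp)

theorem subsetSumCount_mul_card (D : Finset G) (k : ℕ) (b : G) :
    (subsetSumCount D k b : ℂ) * Fintype.card G
      = ∑ ψ : AddChar G ℂ, ψ (-b) * (D.val.map ψ).esymm k := by
  have hterm (ψ : AddChar G ℂ) : ψ (-b) * (D.val.map ψ).esymm k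
      = ∑ S ∈ D.powersetCard k, ψ (-b + ∑ x ∈ S, x) := by
    rw [Finset.esymm_map_val, mul_sum]
    exact sum_congr rfl fun S _ => by rw [AddChar.map_add_eq_mul, AddChar.map_sum_eq_prod]
  simp_rw [hterm]
  rw [sum_comm]
  simp_rw [AddChar.sum_apply_eq_ite, neg_add_eq_zero, eq_comm (a := b)]
  rw [← sum_filter, sum_const, nsmul_eq_mul, subsetSumCount]

theorem abs_subsetSumCount_sub_le (D : Finset G) (k : ℕ) (b : G) {B : ℝ} (hB : 0 ≤ B)
    (h : ∀ ψ : AddChar G ℂ, ψ ≠ 0 → ‖(D.val.map ψ).esymm k‖ ≤ B) :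
    |(subsetSumCount D k b : ℝ) - 1 / Fintype.card G * (#D).choose k| ≤ B := by
  set N := Fintype.card G
  have hN : (0 : ℝ) < N := Nat.cast_pos.2 Fintype.card_pos
  have htrivial : (D.val.map (0 : AddChar G ℂ)).esymm k = (#D).choose k := by
    rw [Finset.esymm_map_val]
    simp
  have herror : (subsetSumCount D k b : ℂ) * N - (#D).choose k
      = ∑ ψ ∈ (univ : Finset (AddChar G ℂ)).erase 0, ψ (-b) * (D.val.map ψ).esymm k := by
    rw [subsetSumCount_mul_card, ← add_sum_erase _ _ (mem_univ 0), htrivial, AddChar.zero_apply,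
      one_mul, add_sub_cancel_left]
  have hbound :
      ‖∑ ψ ∈ (univ : Finset (AddChar G ℂ)).erase 0, ψ (-b) * (D.val.map ψ).esymm k‖ ≤ N * B := by
    refine (norm_sum_le _ _).trans ((sum_le_card_nsmul _ _ B fun ψ hψ => ?_).trans ?_)
    · rw [norm_mul, AddChar.norm_apply, one_mul]
      exact h ψ (ne_of_mem_erase hψ)
    · rw [nsmul_eq_mul, card_erase_of_mem (mem_univ _), card_univ, AddChar.card_eq]
      gcongr
      exact_mod_cast Nat.sub_le N 1
  rw [← mul_le_mul_iff_of_pos_left hN]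
  calc N * |(subsetSumCount D k b : ℝ) - 1 / N * (#D).choose k|
      = ‖(((subsetSumCount D k b * N - (#D).choose k : ℝ)) : ℂ)‖ := by
        rw [Complex.norm_real, Real.norm_eq_abs, ← abs_of_pos hN, ← abs_mul, abs_of_pos hN]
        congr 1
        field_simp
    _ ≤ N * B := by
        push_cast
        rwa [herror]

theorem AddChar.norm_esymm_map_le_multichoose (ψ : AddChar G ℂ) {D : Finset G}
    (hD : #Dᶜ ≤ #D) {x : ℝ} (hx : #Dᶜ + (#D - #Dᶜ) / addOrderOf ψ ≤ x) (k : ℕ) :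
    ‖(D.val.map ψ).esymm k‖ ≤ Ring.multichoose x k := by
  have hd : 0 < addOrderOf ψ := addOrderOf_pos ψ
  have hD' : (#Dᶜ : ℝ) ≤ #D := Nat.cast_le.2 hD
  have hx1 : 1 ≤ x := by
    rcases Nat.eq_zero_or_pos #Dᶜ with hempty | hne
    · have hdD : addOrderOf ψ ≤ #D := by
        simpa [← card_add_card_compl D, hempty] using addOrderOf_le_card_univ (x := ψ)
      rw [hempty, Nat.cast_zero, zero_add, sub_zero] at hx
      exact ((one_le_div (Nat.cast_pos.2 hd)).2 (Nat.cast_le.2 hdD)).trans hx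
    · have : 0 ≤ (#D - #Dᶜ : ℝ) / addOrderOf ψ := div_nonneg (by linarith) (Nat.cast_nonneg _)
      have : (1 : ℝ) ≤ #Dᶜ := Nat.one_le_cast.2 hne
      linarith
  exact le_multichoose_of_mul_le_sum hd (Nat.cast_nonneg _) hD' hx hx1 (fun _ => norm_nonneg _)
    (by simp [Multiset.esymm]) (ψ.norm_sum_map_pow_le D) (Multiset.natCast_mul_norm_esymm_le _) k

end Characters

theorem subsetSum_asymptotic_abelian_general
    (G : Type*) [AddCommGroup G] [Fintype G] [DecidableEq G]
    (D : Finset G) (c k : ℕ) (b : G)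
    (hD : D.card + c = Fintype.card G) (hc : c ≤ D.card) :
    |(subsetSumCount D k b : ℝ)
        - (1 / (Fintype.card G : ℝ)) * realChoose ((Fintype.card G : ℝ) - c) k|
      ≤ realChoose ((c : ℝ) + ((Fintype.card G : ℝ) - 2 * c) *
          deltaMoebius (AddMonoid.exponent G) + k - 1) k := by
  have hcompl : #Dᶜ = c := by rw [card_compl]; omega
  have hcard : (Fintype.card G : ℝ) = #D + c := by exact_mod_cast hD.symm
  have hcD : (c : ℝ) ≤ #D := Nat.cast_le.2 hc
  have hδ : 0 ≤ deltaMoebius (AddMonoid.exponent G) := sum_nonneg fun _ _ => by positivity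
  rw [realChoose_add_sub_one, show (Fintype.card G : ℝ) - c = #D by linarith, realChoose_natCast,
    show (Fintype.card G : ℝ) - 2 * c = #D - c by linarith]
  refine abs_subsetSumCount_sub_le D k b
    (Ring.multichoose_nonneg (add_nonneg c.cast_nonneg (mul_nonneg (by linarith) hδ)) k)
    fun ψ hψ => ψ.norm_esymm_map_le_multichoose (hcompl ▸ hc) ?_ k
  rw [hcompl, div_eq_mul_one_div]
  gcongr
  exact ψ.one_div_addOrderOf_le_deltaMoebius_exponent hψ

/-- **Theorem (subset sums over a finite abelian group).**
If `D ⊆ G` with `|D| = |G| - c ≥ c` and `0 ≤ k ≤ |D|`, then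
`|N(D,k,b) - (1/|G|)·C(|G|-c, k)| ≤ C(c + (|G|-2c)·δ(e(G)) + k - 1, k)`. -/
theorem subsetSum_asymptotic_abelian
    (G : Type*) [AddCommGroup G] [Fintype G] [DecidableEq G]
    (D : Finset G) (c k : ℕ) (b : G)
    (hD : D.card + c = Fintype.card G) (hc : c ≤ D.card) (hk : k ≤ D.card) :
    |(subsetSumCount D k b : ℝ)
        - (1 / (Fintype.card G : ℝ)) * realChoose ((Fintype.card G : ℝ) - c) k|
      ≤ realChoose ((c : ℝ) + ((Fintype.card G : ℝ) - 2 * c) *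
          deltaMoebius (AddMonoid.exponent G) + k - 1) k :=
  subsetSum_asymptotic_abelian_general G D c k b hD hc
end

section
/- Let Ω be a finite set, k ≥ 1, and X ⊆ Ω^k. For any complex-valued function f defined on X (extended by 0 outside X), ∑_{x ∈ X̄} f(x_1,…,x_k) = ∑_{τ ∈ S_k} sign(τ) · ∑_{x ∈ X_τ} f(x_1,…,x_k). -/
open Finset

lemma sign_sum_aux {Ω : Type*} [DecidableEq Ω] {k : ℕ} (x : Fin k → Ω) :
    ∑ τ : Equiv.Perm (Fin k),
      (if ∀ i, x (τ i) = x i then (Equiv.Perm.sign τ : ℂ) else 0)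
      = if Function.Injective x then 1 else 0 := by
  by_cases h : Function.Injective x
  · rw [if_pos h]
    rw [Finset.sum_eq_single (1 : Equiv.Perm (Fin k))]
    · simp
    · intro τ _ hτ
      rw [if_neg]
      intro hall
      exact hτ (Equiv.ext fun i => h (hall i))
    · simp
  · rw [if_neg h]
    rw [Function.not_injective_iff] at h
    obtain ⟨i, j, hij, hne⟩ := h
    have hswap : ∀ y, x (Equiv.swap i j y) = x y := by
      intro y
      rcases eq_or_ne y i with rfl | hyi
      · rw [Equiv.swap_apply_left]; exact hij.symm
      rcases eq_or_ne y j with rfl | hyj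
      · rw [Equiv.swap_apply_right]; exact hij
      · rw [Equiv.swap_apply_of_ne_of_ne hyi hyj]
    set g : Equiv.Perm (Fin k) → ℂ :=
      fun τ => if ∀ i, x (τ i) = x i then (Equiv.Perm.sign τ : ℂ) else 0 with hg
    have h1 : ∑ τ, g (Equiv.mulLeft (Equiv.swap i j) τ) = ∑ τ, g τ :=
      Equiv.sum_comp _ g
    have h2 : ∀ τ, g (Equiv.mulLeft (Equiv.swap i j) τ) = -g τ := by
      intro τ
      simp only [hg, Equiv.coe_mulLeft, Equiv.Perm.mul_apply, hswap,
        Equiv.Perm.sign_mul, Equiv.Perm.sign_swap hne]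
      split <;> simp
    simp only [h2, Finset.sum_neg_distrib] at h1
    have hs : ∑ τ, g τ = 0 := by linear_combination (-1/2 : ℂ) * h1
    simpa [hg] using hs

/-- **The distinct coordinate sieving formula (Li–Wan).**
For a finite set `Ω`, `X ⊆ Ω^k` and any complex valued function `f` on `X`,
`∑_{x ∈ X̄} f(x) = ∑_{τ ∈ S_k} sign(τ) ∑_{x ∈ X_τ} f(x)`, where `X̄` consists of the
tuples in `X` with pairwise distinct coordinates and `X_τ` consists of the tuples in
`X` whose coordinates are constant on each cycle of `τ`. -/
theorem distinct_coordinate_sieve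
    (Ω : Type*) [Fintype Ω] [DecidableEq Ω] (k : ℕ) (hk : 1 ≤ k)
    (X : Finset (Fin k → Ω)) (f : (Fin k → Ω) → ℂ) :
    ∑ x ∈ X.filter (fun x => Function.Injective x), f x
      = ∑ τ : Equiv.Perm (Fin k),
          (Equiv.Perm.sign τ : ℂ) *
            ∑ x ∈ X.filter (fun x => ∀ i, x (τ i) = x i), f x := by
  simp only [Finset.sum_filter, Finset.mul_sum]
  rw [Finset.sum_comm]
  apply Finset.sum_congr rfl
  intro x _
  rw [show (if Function.Injective x then f x else 0)
      = (if Function.Injective x then (1:ℂ) else 0) * f x by split <;> simp]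
  rw [← sign_sum_aux x, Finset.sum_mul]
  apply Finset.sum_congr rfl
  intro τ _
  split <;> simp
end

section
/- Let Ω be a finite set, k ≥ 1, and X ⊆ Ω^k a symmetric subset (i.e., closed under permuting coordinates by any τ ∈ S_k). Let f be a complex-valued function on X that is symmetric (invariant under permuting its k arguments). Then ∑_{x ∈ X̄} f(x_1,…,x_k) = ∑_{\bar{τ} ∈ C_k} sign(τ) · C(τ) · ∑_{x ∈ X_τ} f(x_1,…,x_k), where C_k is the set of conjugacy classes of S_k, τ is any representative of the class \bar{τ}, and C(τ) is the number of permutations conjugate to τ. -/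
open Finset

private lemma sign_stab_sum {k : ℕ} {Ω : Type*} [DecidableEq Ω] (x : Fin k → Ω) :
    ∑ σ ∈ Finset.univ.filter (fun σ : Equiv.Perm (Fin k) => ∀ i, x (σ i) = x i),
      ((Equiv.Perm.sign σ : ℤ) : ℂ) = if Function.Injective x then 1 else 0 := by
  split_ifs with h
  · have hset : Finset.univ.filter (fun σ : Equiv.Perm (Fin k) => ∀ i, x (σ i) = x i)
        = {1} := by
      ext σ
      simp only [mem_filter, mem_univ, true_and, mem_singleton]
      constructor
      · intro hσ
        refine Equiv.ext fun i => ?_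
        show σ i = i
        exact h (hσ i)
      · rintro rfl; intro i; rfl
    rw [hset]
    simp
  · obtain ⟨i, j, hij, hne⟩ := Function.not_injective_iff.mp h
    have hs : ∀ m, x (Equiv.swap i j m) = x m := by
      intro m
      rcases eq_or_ne m i with rfl | hmi
      · rw [Equiv.swap_apply_left]; exact hij.symm
      rcases eq_or_ne m j with rfl | hmj
      · rw [Equiv.swap_apply_right]; exact hij
      · rw [Equiv.swap_apply_of_ne_of_ne hmi hmj]
    apply Finset.sum_involution (fun σ _ => σ * Equiv.swap i j)
    · intro σ hσ
      have : ((Equiv.Perm.sign (σ * Equiv.swap i j) : ℤ) : ℂ)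
          = -((Equiv.Perm.sign σ : ℤ) : ℂ) := by
        rw [Equiv.Perm.sign_mul, Equiv.Perm.sign_swap hne]
        push_cast
        ring
      rw [this]; ring
    · intro σ hσ _ hcontra
      have h1 : Equiv.swap i j = 1 := by
        have := congrArg (σ⁻¹ * ·) hcontra
        simpa [mul_assoc] using this
      exact hne (Equiv.swap_eq_one_iff.mp h1)
    · intro σ hσ
      simp only [mem_filter, mem_univ, true_and] at hσ ⊢
      intro m
      calc x ((σ * Equiv.swap i j) m) = x (σ (Equiv.swap i j m)) := rfl
        _ = x (Equiv.swap i j m) := hσ _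
        _ = x m := hs m
    · intro σ _
      simp [mul_assoc]

private lemma conj_sum {k : ℕ} {Ω : Type*} [DecidableEq Ω]
    (X : Finset (Fin k → Ω)) (f : (Fin k → Ω) → ℂ)
    (hX : ∀ (τ : Equiv.Perm (Fin k)) (x : Fin k → Ω), x ∈ X → (x ∘ τ) ∈ X)
    (hf : ∀ (τ : Equiv.Perm (Fin k)) (x : Fin k → Ω), x ∈ X → f (x ∘ τ) = f x)
    {τ σ : Equiv.Perm (Fin k)} (h : IsConj τ σ) :
    ∑ x ∈ X.filter (fun x => ∀ i, x (σ i) = x i), f x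
      = ∑ x ∈ X.filter (fun x => ∀ i, x (τ i) = x i), f x := by
  rw [isConj_iff] at h
  obtain ⟨c, hc⟩ := h
  have hm1 : c * τ = σ * c := by rw [← hc]; group
  have hm2 : c⁻¹ * σ = τ * c⁻¹ := by rw [← hc]; group
  have h1 : ∀ i, c (τ i) = σ (c i) := fun i => Equiv.Perm.ext_iff.mp hm1 i
  have h2 : ∀ i, c⁻¹ (σ i) = τ (c⁻¹ i) := fun i => Equiv.Perm.ext_iff.mp hm2 i
  refine Finset.sum_nbij' (i := fun x => x ∘ ⇑c) (j := fun y => y ∘ ⇑c⁻¹) ?_ ?_ ?_ ?_ ?_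
  · intro x hx
    simp only [mem_filter] at hx ⊢
    refine ⟨hX c x hx.1, fun i => ?_⟩
    show x (c (τ i)) = x (c i)
    rw [h1 i]; exact hx.2 (c i)
  · intro y hy
    simp only [mem_filter] at hy ⊢
    refine ⟨hX c⁻¹ y hy.1, fun i => ?_⟩
    show y (c⁻¹ (σ i)) = y (c⁻¹ i)
    rw [h2 i]; exact hy.2 (c⁻¹ i)
  · intro x _
    ext i; simp
  · intro y _
    ext i; simp
  · intro x hx
    simp only [mem_filter] at hx
    exact (hf c x hx.1).symm

private lemma sign_conj'' {k : ℕ} {τ σ : Equiv.Perm (Fin k)} (h : IsConj τ σ) :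
    Equiv.Perm.sign σ = Equiv.Perm.sign τ := by
  rw [isConj_iff] at h
  obtain ⟨c, rfl⟩ := h
  simp [mul_comm, mul_assoc, mul_left_comm, Int.units_mul_self]

/-- **The distinct coordinate sieving formula, symmetric version (Li–Wan).**
If `X ⊆ Ω^k` is symmetric (closed under permutation of coordinates) and `f` is a
symmetric complex valued function on `X`, then for any set `T` of representatives of
the conjugacy classes of `S_k` (each permutation is conjugate to exactly one `τ ∈ T`),
`∑_{x ∈ X̄} f(x) = ∑_{τ ∈ T} sign(τ) · C(τ) · ∑_{x ∈ X_τ} f(x)`,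
where `C(τ)` is the number of permutations conjugate to `τ`. -/
theorem distinct_coordinate_sieve_symmetric
    (Ω : Type*) [Fintype Ω] [DecidableEq Ω] (k : ℕ) (hk : 1 ≤ k)
    (X : Finset (Fin k → Ω)) (f : (Fin k → Ω) → ℂ)
    (hX : ∀ (τ : Equiv.Perm (Fin k)) (x : Fin k → Ω), x ∈ X → (x ∘ τ) ∈ X)
    (hf : ∀ (τ : Equiv.Perm (Fin k)) (x : Fin k → Ω), x ∈ X → f (x ∘ τ) = f x)
    (T : Finset (Equiv.Perm (Fin k)))
    (hT : ∀ σ : Equiv.Perm (Fin k), ∃! τ, τ ∈ T ∧ IsConj τ σ) :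
    ∑ x ∈ X.filter (fun x => Function.Injective x), f x
      = ∑ τ ∈ T,
          (Equiv.Perm.sign τ : ℂ) *
            ((Finset.univ.filter (fun σ : Equiv.Perm (Fin k) => IsConj τ σ)).card : ℂ) *
            ∑ x ∈ X.filter (fun x => ∀ i, x (τ i) = x i), f x := by
  -- the "full" sum over all permutations
  have key : (∑ σ : Equiv.Perm (Fin k), ((Equiv.Perm.sign σ : ℤ) : ℂ) *
          ∑ x ∈ X.filter (fun x => ∀ i, x (σ i) = x i), f x)
      = ∑ x ∈ X.filter (fun x => Function.Injective x), f x := by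
    calc ∑ σ : Equiv.Perm (Fin k), ((Equiv.Perm.sign σ : ℤ) : ℂ) *
            ∑ x ∈ X.filter (fun x => ∀ i, x (σ i) = x i), f x
        = ∑ σ : Equiv.Perm (Fin k), ∑ x ∈ X,
            if (∀ i, x (σ i) = x i) then ((Equiv.Perm.sign σ : ℤ) : ℂ) * f x else 0 := by
          refine Finset.sum_congr rfl fun σ _ => ?_
          rw [Finset.mul_sum, Finset.sum_filter]
      _ = ∑ x ∈ X, ∑ σ : Equiv.Perm (Fin k),
            if (∀ i, x (σ i) = x i) then ((Equiv.Perm.sign σ : ℤ) : ℂ) * f x else 0 :=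
          Finset.sum_comm
      _ = ∑ x ∈ X, (if Function.Injective x then (1 : ℂ) else 0) * f x := by
          refine Finset.sum_congr rfl fun x _ => ?_
          rw [← sign_stab_sum x, Finset.sum_filter, Finset.sum_mul]
          refine Finset.sum_congr rfl fun σ _ => ?_
          split_ifs <;> simp
      _ = ∑ x ∈ X.filter (fun x => Function.Injective x), f x := by
          rw [Finset.sum_filter]
          refine Finset.sum_congr rfl fun x _ => ?_
          split_ifs <;> simp
  rw [← key]
  -- partition the permutations into conjugacy classes
  have hU : (Finset.univ : Finset (Equiv.Perm (Fin k)))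
      = T.biUnion (fun τ => Finset.univ.filter (fun σ => IsConj τ σ)) := by
    ext σ
    simp only [mem_univ, mem_biUnion, mem_filter, true_iff, true_and]
    obtain ⟨τ, hτ, _⟩ := hT σ
    exact ⟨τ, hτ.1, hτ.2⟩
  have hdisj : ∀ τ₁ ∈ T, ∀ τ₂ ∈ T, τ₁ ≠ τ₂ →
      Disjoint (Finset.univ.filter (fun σ => IsConj τ₁ σ))
        (Finset.univ.filter (fun σ => IsConj τ₂ σ)) := by
    intro τ₁ h₁ τ₂ h₂ hne
    rw [Finset.disjoint_left]
    intro σ hσ₁ hσ₂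
    simp only [mem_filter, mem_univ, true_and] at hσ₁ hσ₂
    obtain ⟨τ₀, _, huniq⟩ := hT σ
    exact hne ((huniq τ₁ ⟨h₁, hσ₁⟩).trans (huniq τ₂ ⟨h₂, hσ₂⟩).symm)
  conv_lhs => rw [hU, Finset.sum_biUnion hdisj]
  refine Finset.sum_congr rfl fun τ hτ => ?_
  have : ∀ σ ∈ Finset.univ.filter (fun σ => IsConj τ σ),
      ((Equiv.Perm.sign σ : ℤ) : ℂ) * ∑ x ∈ X.filter (fun x => ∀ i, x (σ i) = x i), f x
        = ((Equiv.Perm.sign τ : ℤ) : ℂ)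
            * ∑ x ∈ X.filter (fun x => ∀ i, x (τ i) = x i), f x := by
    intro σ hσ
    simp only [mem_filter, mem_univ, true_and] at hσ
    rw [sign_conj'' hσ, conj_sum X f hX hf hσ]
  rw [Finset.sum_congr rfl this, Finset.sum_const, nsmul_eq_mul]
  push_cast
  ring
end
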